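/- arXiv:1301.3409 — 5 statements merged into one kernel-verified Lean document; each statement's English description precedes it below -/
import Mathlib

section
/- In a Frobenius group FH with kernel F and complement H, no nontrivial element of the complement H fixes (by conjugation) a nontrivial coset of any subgroup of the kernel F. Equivalently: if h ∈ H, h ≠ 1, K ≤ F is a subgroup, and x ∈ F with xK ≠ K and (xK)^h = xK (as a coset, under the conjugation action of h on F), then a contradiction follows. -/
/-!
If conjugation by `h` maps the coset `xK` to itself, it also normalizes `K` and moves `x` to
`x * c` with `c ∈ K`. Conjugation by `h` is fixed-point-free on the finite group `K`, so
`k ↦ k * (h k h⁻¹)⁻¹` is injective, hence surjective on `K`; solving `k * (h k h⁻¹)⁻¹ = c`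
yields a fixed point `x * k` of `h` in `F`, which must be `1`, forcing `x ∈ K`.
-/

open Pointwise

namespace MonoidHom

variable {G : Type*} [Group G] (φ : G →* G) {K : Subgroup G} {x : G}

theorem map_mem_leftCoset_of_image_subset (hφ : φ '' (x • (K : Set G)) ⊆ x • (K : Set G)) :
    φ x ∈ x • (K : Set G) :=
  hφ ⟨x, ⟨1, K.one_mem, mul_one x⟩, rfl⟩

theorem map_mem_of_image_leftCoset_subset (hφ : φ '' (x • (K : Set G)) ⊆ x • (K : Set G))
    {k : G} (hk : k ∈ K) : φ k ∈ K := by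
  have hx := (mem_leftCoset_iff x).mp (φ.map_mem_leftCoset_of_image_subset hφ)
  have hxk := (mem_leftCoset_iff x).mp (hφ ⟨x * k, mem_leftCoset x hk, rfl⟩)
  simpa [mul_assoc] using K.mul_mem (K.inv_mem hx) hxk

theorem exists_fixed_mem_leftCoset [Finite K] (hφ : φ '' (x • (K : Set G)) ⊆ x • (K : Set G))
    (hfree : ∀ k ∈ K, φ k = k → k = 1) : ∃ y ∈ x • (K : Set G), φ y = y := by
  let ψ : K →* K :=
    (φ.domRestrict K).codRestrict K fun k ↦ φ.map_mem_of_image_leftCoset_subset hφ k.2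
  have hψ : FixedPointFree ψ := fun k hk ↦ Subtype.ext (hfree k k.2 (congrArg Subtype.val hk))
  obtain ⟨c, hcK, hc : x * c = φ x⟩ := φ.map_mem_leftCoset_of_image_subset hφ
  obtain ⟨k, hk⟩ := hψ.commutatorMap_surjective ⟨c, hcK⟩
  have hkc : (k : G) / φ k = c := congrArg Subtype.val hk
  refine ⟨x * k, mem_leftCoset x k.2, ?_⟩
  rw [map_mul, ← hc, ← hkc, mul_assoc, div_mul_cancel]

end MonoidHom

theorem stmt_0_general {G : Type*} [Group G] [Fintype G]
    (F H : Subgroup G)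
    (hfrob : ∀ h ∈ H, h ≠ 1 → ∀ f ∈ F, h * f * h⁻¹ = f → f = 1)
    (h : G) (hh : h ∈ H) (hh1 : h ≠ 1)
    (K : Subgroup G) (hKF : K ≤ F)
    (x : G) (hxF : x ∈ F) (hxK : x ∉ K)
    (hfix : (fun g => h * g * h⁻¹) '' (x • (K : Set G)) = x • (K : Set G)) :
    False := by
  have hconj : ⇑(MulAut.conj h : G →* G) = fun g => h * g * h⁻¹ := rfl
  obtain ⟨_, ⟨k, hk, rfl⟩, hfixed⟩ := (MulAut.conj h : G →* G).exists_fixed_mem_leftCoset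
    (hconj ▸ hfix.subset) fun k hk ↦ hfrob h hh hh1 k (hKF hk)
  have hxk : x * k = 1 := hfrob h hh hh1 _ (F.mul_mem hxF (hKF hk)) hfixed
  exact hxK (eq_inv_of_mul_eq_one_left hxk ▸ K.inv_mem hk)

/-- In a Frobenius group FH (finite, with normal kernel F, complement H acting
fixed-point-freely on F), no nontrivial element h of the complement fixes, under
conjugation, a nontrivial coset xK of a subgroup K of the kernel F. -/
theorem stmt_0 {G : Type*} [Group G] [Fintype G]
    (F H : Subgroup G) (hFN : F.Normal) (hcompl : Subgroup.IsComplement' F H)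
    (hfrob : ∀ h ∈ H, h ≠ 1 → ∀ f ∈ F, h * f * h⁻¹ = f → f = 1)
    (h : G) (hh : h ∈ H) (hh1 : h ≠ 1)
    (K : Subgroup G) (hKF : K ≤ F)
    (x : G) (hxF : x ∈ F) (hxK : x ∉ K)
    (hfix : (fun g => h * g * h⁻¹) '' (x • (K : Set G)) = x • (K : Set G)) :
    False :=
  stmt_0_general F H hfrob h hh hh1 K hKF x hxF hxK hfix
end

section
/- Let FH be a Frobenius group with kernel F and complement H. Suppose FH acts on a set (or by automorphisms on a group) in such a way that the induced action of F is nontrivial. Then the complement H acts faithfully. -/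
/-!
Conjugation by a nontrivial `h ∈ H` is a fixed-point-free automorphism of the finite group `F`,
so `g ↦ g * (h g h⁻¹)⁻¹` is injective, hence bijective, on `F`: every element of `F` is a
commutator `g h g⁻¹ h⁻¹`. Such a commutator lies in every normal subgroup containing `h`, in
particular in the kernel of the action; so if `h` acts trivially, so does all of `F`.
-/

open MonoidHom

theorem Subgroup.le_of_fixedPointFree_conjNormal {G : Type*} [Group G] {F N : Subgroup G}
    [F.Normal] [N.Normal] [Finite F] {h : G} (hN : h ∈ N)
    (hfpf : FixedPointFree (MulAut.conjNormal h : MulAut F)) : F ≤ N := by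
  intro f hf
  obtain ⟨g, hg⟩ := hfpf.commutatorMap_surjective ⟨f, hf⟩
  have hf_eq : f = g * h * (g : G)⁻¹ * h⁻¹ := by
    have := congrArg Subtype.val hg
    simp only [commutatorMap_apply, Subgroup.coe_div, MulAut.conjNormal_apply] at this
    rw [← this, div_eq_mul_inv]
    group
  rw [hf_eq]
  exact N.mul_mem (‹N.Normal›.conj_mem h hN g) (N.inv_mem hN)

theorem fixedPointFree_conjNormal {G : Type*} [Group G] {F : Subgroup G} [F.Normal] {h : G}
    (hfrob : ∀ f ∈ F, h * f * h⁻¹ = f → f = 1) :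
    FixedPointFree (MulAut.conjNormal h : MulAut F) := fun f hf =>
  Subtype.ext <| hfrob f f.2 <| by simpa [MulAut.conjNormal_apply] using congrArg Subtype.val hf

theorem stmt_1_general {G : Type*} [Group G] [Fintype G] {X : Type*} [MulAction G X]
    (F H : Subgroup G) (hFN : F.Normal)
    (hfrob : ∀ h ∈ H, h ≠ 1 → ∀ f ∈ F, h * f * h⁻¹ = f → f = 1)
    (hFnontriv : ∃ f ∈ F, ∃ x : X, f • x ≠ x) :
    ∀ h ∈ H, (∀ x : X, h • x = x) → h = 1 := by
  intro h hH hfix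
  by_contra hne
  obtain ⟨f, hf, x, hx⟩ := hFnontriv
  have hker : h ∈ (MulAction.toPermHom G X).ker := by
    ext y
    exact hfix y
  have hF_ker : F ≤ (MulAction.toPermHom G X).ker :=
    Subgroup.le_of_fixedPointFree_conjNormal hker (fixedPointFree_conjNormal (hfrob h hH hne))
  exact hx (Equiv.Perm.ext_iff.mp (hF_ker hf) x)

/-- If a Frobenius group FH = F ⋊ H acts on a set X with F acting nontrivially,
then the complement H acts faithfully. -/
theorem stmt_1 {G : Type*} [Group G] [Fintype G] {X : Type*} [MulAction G X]
    (F H : Subgroup G) (hFN : F.Normal) (hcompl : Subgroup.IsComplement' F H)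
    (hfrob : ∀ h ∈ H, h ≠ 1 → ∀ f ∈ F, h * f * h⁻¹ = f → f = 1)
    (hFnontriv : ∃ f ∈ F, ∃ x : X, f • x ≠ x) :
    ∀ h ∈ H, (∀ x : X, h • x = x) → h = 1 :=
  stmt_1_general F H hFN hfrob hFnontriv
end

section
/- Let M = ⊕_{h∈H} M_h be a free kH-module structure where the subspaces M_h form a regular H-orbit (M_{h₁}h₂ = M_{h₁h₂}), and let c be a linear operator on M commuting with the H-action that leaves each M_h invariant. If c acts trivially on the fixed-point subspace C_M(H), then c acts trivially on all of M. -/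
/-!
For `v ∈ M_h` the orbit sum `w = ∑_g g • v` is `H`-fixed, so `c w = w`. Its components
`(h⁻¹ g) • v ∈ M_g` are each mapped into `M_g` by `c`, so independence of the `M_g` forces
`c` to fix every component, in particular `v` itself. As the `M_h` span `M`, `c = id`.
-/

open Finset

theorem smul_sum_smul_eq_sum_smul {G N : Type*} [Group G] [Fintype G] [AddCommMonoid N]
    [DistribMulAction G N] (g : G) (v : N) : g • ∑ h : G, h • v = ∑ h : G, h • v := by
  simp_rw [smul_sum, smul_smul]
  exact Fintype.sum_equiv (Equiv.mulLeft g) _ _ fun _ => rfl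

section InvariantSubmodules

variable {R M ι : Type*} [Ring R] [AddCommGroup M] [Module R M]

theorem iSupIndep.apply_eq_self_of_map_sum_eq_sum [Fintype ι] {A : ι → Submodule R M}
    (hA : iSupIndep A) {c : M →ₗ[R] M} (hc : ∀ i, (A i).map c ≤ A i) {x : ι → M}
    (hx : ∀ i, x i ∈ A i) (hsum : c (∑ i, x i) = ∑ i, x i) (i : ι) : c (x i) = x i :=
  (iSupIndep_iff_finsetSum_eq_imp_eq A).1 hA univ (fun i => c (x i)) x
    (fun i _ => ⟨hc i ⟨x i, hx i, rfl⟩, hx i⟩) (by rwa [← map_sum]) i (mem_univ i)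

theorem LinearMap.eq_id_of_forall_mem_eq {A : ι → Submodule R M} (htop : ⨆ i, A i = ⊤)
    {c : M →ₗ[R] M} (hc : ∀ i, ∀ v ∈ A i, c v = v) : c = LinearMap.id :=
  LinearMap.eqLocus_eq_top.1 <| top_unique <| htop ▸ iSup_le fun i v hv =>
    LinearMap.mem_eqLocus.2 (hc i v hv)

end InvariantSubmodules

/-- Let M = ⊕_{h∈H} M_h be a free kH-module structure, the subspaces M_h forming a
regular H-orbit (M_{h₁}·h₂ = M_{h₁h₂}).  If a k-linear operator c on M leaves each
M_h invariant and fixes the H-fixed points pointwise, then c is the identity. -/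
theorem stmt_4 {k : Type*} [Field k] {M : Type*} [AddCommGroup M] [Module k M]
    {H : Type*} [Group H] [Fintype H] [DecidableEq H]
    [DistribMulAction H M] [SMulCommClass H k M]
    (A : H → Submodule k M) (hint : DirectSum.IsInternal A)
    (hreg : ∀ h₁ h₂ : H, (A h₁).map (DistribMulAction.toLinearMap k M h₂) = A (h₁ * h₂))
    (c : M →ₗ[k] M)
    (hcinv : ∀ h : H, (A h).map c ≤ A h)
    (hcfix : ∀ v : M, (∀ h : H, h • v = v) → c v = v) :
    ∀ v : M, c v = v := by
  have hfixed : ∀ h, ∀ v ∈ A h, c v = v := by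
    intro h v hv
    have hx : ∀ g, (h⁻¹ * g) • v ∈ A g := fun g => by
      have hmem := (hreg h (h⁻¹ * g)).le (Submodule.mem_map_of_mem hv)
      rwa [mul_inv_cancel_left] at hmem
    have horbit : ∑ g, (h⁻¹ * g) • v = ∑ g, g • v :=
      Fintype.sum_equiv (Equiv.mulLeft h⁻¹) _ _ fun _ => rfl
    have hsum : c (∑ g, (h⁻¹ * g) • v) = ∑ g, (h⁻¹ * g) • v := by
      rw [horbit]
      exact hcfix _ fun g => smul_sum_smul_eq_sum_smul g v
    simpa using hint.submodule_iSupIndep.apply_eq_self_of_map_sum_eq_sum hcinv hx hsum h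
  exact LinearMap.congr_fun (LinearMap.eq_id_of_forall_mem_eq hint.submodule_iSup_eq_top hfixed)
end

section
/- Let G be a finite group, φ an automorphism of order n coprime to |G|, and u, x, y, ..., z ∈ G with φ-terms u_j, x_{i_1}, ..., z_{i_k} in the extended associated Lie ring L = L(G) ⊗ ℤ[ω,1/n], where j + i_1 + ... + i_k ≡ 0 (mod n). If for all tuples (a_1,...,a_k) ∈ (ℤ/nℤ)^k the group-theoretic congruence ∏_{t=0}^{n-1} [u, x^{φ^{a_1}}, y^{φ^{a_2}}, ..., z^{φ^{a_k}}]^{φ^t} ≡ 1 (mod γ_{k+2}(G)) holds, then [u_j, x_{i_1}, y_{i_2}, ..., z_{i_k}] = 0 in L. -/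
/-!
The bracket of two φ-terms is again a φ-term, with the indices added:
`⁅u_j, v_i⁆ = w_{j+i}` where `w = (1/n) ∑_a ω^{-ia} ⁅u, φ^a v⁆`; this comes from reindexing the
double sum over `(s, t)` by `t = s + a`, which is legitimate because everything is `n`-periodic
in `t`. Iterating, `[u_j, x_{i₁}, …, z_{i_k}]` is the φ-term, of index `j + i₁ + ⋯ + i_k ≡ 0`,
of a linear combination of brackets `[u, x^{φ^{a₁}}, …, z^{φ^{a_k}}]`. A φ-term of index `0` is
`1/n` times the orbit sum `∑_t φ^t`, which kills each of these brackets by hypothesis.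
-/

open Finset

theorem Function.Periodic.sum_range_comp_add_left {M : Type*} [AddCancelCommMonoid M]
    {f : ℕ → M} {n : ℕ} (hf : Function.Periodic f n) (s : ℕ) :
    ∑ t ∈ range n, f (s + t) = ∑ t ∈ range n, f t := by
  induction s with
  | zero => simp
  | succ s ih =>
    have hwrap : ∑ t ∈ range n, f (s + (t + 1)) + f (s + 0)
        = ∑ t ∈ range n, f (s + t) + f (s + n) := by
      rw [← sum_range_succ' (fun t => f (s + t)), sum_range_succ]
    rw [hf, add_zero, add_right_cancel_iff] at hwrap
    simpa [add_right_comm s, add_assoc] using hwrap.trans ih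

section LieRing

variable {R L : Type*} [CommRing R] [LieRing L] [LieAlgebra R L]

theorem LinearMap.pow_apply_lie {E : L →ₗ[R] L} (hE : ∀ a b : L, E ⁅a, b⁆ = ⁅E a, E b⁆)
    (t : ℕ) (a b : L) : (E ^ t) ⁅a, b⁆ = ⁅(E ^ t) a, (E ^ t) b⁆ := by
  induction t with
  | zero => rfl
  | succ t ih => simp only [pow_succ', Module.End.mul_apply, ih, hE]

variable (R) in
def leftNormedBracket (l : List L) : L →ₗ[R] L where
  toFun u := l.foldl (fun acc z => ⁅acc, z⁆) u
  map_add' u v := by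
    induction l generalizing u v with
    | nil => rfl
    | cons z l ih => rw [List.foldl_cons, add_lie]; exact ih _ _
  map_smul' c u := by
    induction l generalizing u with
    | nil => rfl
    | cons z l ih => rw [List.foldl_cons, smul_lie]; exact ih _

@[simp] theorem leftNormedBracket_apply (l : List L) (u : L) :
    leftNormedBracket R l u = l.foldl (fun acc z => ⁅acc, z⁆) u := rfl

-- The paper's `u_j = (1/n) ∑_t ω^{-jt} u^{φ^t}` is `phiTerm (1/n) ω⁻¹ φ n j u`.
def phiTerm (c ρ : R) (E : L →ₗ[R] L) (n j : ℕ) (u : L) : L :=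
  c • ∑ t ∈ range n, ρ ^ (j * t) • (E ^ t) u

section PhiTerms

variable {c ρ : R} {E : L →ₗ[R] L} {n : ℕ}

theorem lie_phiTerm (hE : ∀ a b : L, E ⁅a, b⁆ = ⁅E a, E b⁆) (hord : E ^ n = 1)
    (hρ : ρ ^ n = 1) (j i : ℕ) (u v : L) :
    ⁅phiTerm c ρ E n j u, phiTerm c ρ E n i v⁆
      = phiTerm c ρ E n (j + i) (c • ∑ a ∈ range n, ρ ^ (i * a) • ⁅u, (E ^ a) v⁆) := by
  have shift (s : ℕ) : ∑ t ∈ range n, ρ ^ (i * t) • ⁅(E ^ s) u, (E ^ t) v⁆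
      = ρ ^ (i * s) • (E ^ s) (∑ a ∈ range n, ρ ^ (i * a) • ⁅u, (E ^ a) v⁆) := by
    have hper : Function.Periodic (fun t => ρ ^ (i * t) • ⁅(E ^ s) u, (E ^ t) v⁆) n := by
      intro t
      simp only [mul_add, pow_add, pow_mul' ρ i n, hρ, one_pow, mul_one, hord]
    rw [← hper.sum_range_comp_add_left s]
    simp only [map_sum, map_smul, LinearMap.pow_apply_lie hE, smul_sum, smul_smul, mul_add,
      pow_add, Module.End.mul_apply]
  calc ⁅phiTerm c ρ E n j u, phiTerm c ρ E n i v⁆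
      = c • c • ∑ s ∈ range n,
          ρ ^ (j * s) • ∑ t ∈ range n, ρ ^ (i * t) • ⁅(E ^ s) u, (E ^ t) v⁆ := by
        rw [phiTerm, phiTerm, smul_lie, lie_smul, sum_lie_sum]
        simp only [smul_lie, lie_smul, smul_sum, smul_smul]
        refine sum_congr rfl fun s _ => sum_congr rfl fun t _ => ?_
        congr 1; ring
    _ = c • c • ∑ s ∈ range n,
          ρ ^ (j * s) • ρ ^ (i * s) • (E ^ s) (∑ a ∈ range n, ρ ^ (i * a) • ⁅u, (E ^ a) v⁆) := by
        simp only [shift]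
    _ = phiTerm c ρ E n (j + i) (c • ∑ a ∈ range n, ρ ^ (i * a) • ⁅u, (E ^ a) v⁆) := by
        simp only [phiTerm, map_smul, map_sum, smul_sum, smul_smul]
        refine sum_congr rfl fun s _ => sum_congr rfl fun t _ => ?_
        congr 1; ring

theorem phiTerm_of_dvd (hρ : ρ ^ n = 1) {j : ℕ} (hj : n ∣ j) (u : L) :
    phiTerm c ρ E n j u = c • (∑ t ∈ range n, E ^ t) u := by
  obtain ⟨m, rfl⟩ := hj
  simp [phiTerm, LinearMap.sum_apply, mul_assoc, pow_mul, hρ]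

theorem foldl_lie_phiTerm_eq_zero (hE : ∀ a b : L, E ⁅a, b⁆ = ⁅E a, E b⁆) (hord : E ^ n = 1)
    (hρ : ρ ^ n = 1) (k : ℕ) (u : L) (x : Fin k → L) (j : ℕ) (i : Fin k → ℕ)
    (hdvd : n ∣ j + ∑ s, i s)
    (horbit : ∀ a : Fin k → ℕ, (∑ t ∈ range n, E ^ t)
      ((List.ofFn fun s => (E ^ a s) (x s)).foldl (fun acc z => ⁅acc, z⁆) u) = 0) :
    (List.ofFn fun s => phiTerm c ρ E n (i s) (x s)).foldl (fun acc z => ⁅acc, z⁆)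
      (phiTerm c ρ E n j u) = 0 := by
  induction k generalizing u j with
  | zero =>
    simpa [phiTerm_of_dvd hρ (by simpa using hdvd)] using congrArg (c • ·) (horbit Fin.elim0)
  | succ k ih =>
    rw [List.ofFn_succ, List.foldl_cons, lie_phiTerm hE hord hρ]
    refine ih _ (x ∘ Fin.succ) _ (i ∘ Fin.succ) (by simpa [Fin.sum_univ_succ, add_assoc] using hdvd)
      fun a => ?_
    rw [← leftNormedBracket_apply (R := R), ← LinearMap.comp_apply, map_smul, map_sum]
    refine smul_eq_zero_of_right _ (sum_eq_zero fun b _ => ?_)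
    simpa [List.ofFn_succ] using congrArg (ρ ^ (i 0 * b) • ·) (horbit (Fin.cons b a))

end PhiTerms

end LieRing

theorem stmt_17_general {R L : Type*} [CommRing R] [LieRing L] [LieAlgebra R L]
    (n : ℕ) (ω ν : Rˣ)
    (hω : (ω : R) ^ n = 1)
    (E : L →ₗ[R] L) (hEbr : ∀ a b : L, E ⁅a, b⁆ = ⁅E a, E b⁆) (hord : E ^ n = 1)
    (k : ℕ) (u : L) (x : Fin k → L)
    (j : ℕ) (i : Fin k → ℕ)
    (hzero : (j + ∑ s, i s) % n = 0)
    (hyp : ∀ a : Fin k → ℕ,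
      ∑ t ∈ Finset.range n,
        (E ^ t) ((List.ofFn fun s => (E ^ (a s)) (x s)).foldl
          (fun acc z => ⁅acc, z⁆) u) = 0) :
    List.foldl (fun acc z => ⁅acc, z⁆)
        (((ν⁻¹ : Rˣ) : R) •
          ∑ t ∈ Finset.range n, ((ω ^ (-((j * t : ℕ) : ℤ)) : Rˣ) : R) • (E ^ t) u)
        (List.ofFn fun s : Fin k =>
          ((ν⁻¹ : Rˣ) : R) •
            ∑ t ∈ Finset.range n, ((ω ^ (-((i s * t : ℕ) : ℤ)) : Rˣ) : R) • (E ^ t) (x s))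
      = 0 := by
  have hcoef (m : ℕ) : ((ω ^ (-(m : ℤ)) : Rˣ) : R) = ((ω⁻¹ : Rˣ) : R) ^ m := by
    rw [zpow_neg, zpow_natCast, ← inv_pow, Units.val_pow_eq_pow_val]
  have hρ : ((ω⁻¹ : Rˣ) : R) ^ n = 1 := by
    have hωn : ω ^ n = 1 := Units.ext (by rw [Units.val_pow_eq_pow_val, hω, Units.val_one])
    rw [← Units.val_pow_eq_pow_val, inv_pow, hωn, inv_one, Units.val_one]
  simp only [hcoef]
  exact foldl_lie_phiTerm_eq_zero hEbr hord hρ k u x j i (Nat.dvd_of_mod_eq_zero hzero)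
    (by simpa only [LinearMap.sum_apply] using hyp)

/-- Vanishing criterion for brackets of φ-terms (Lie-ring form of Lemma on
group congruences).  Let L be a Lie ring over a commutative ring R containing an
invertible element ν = n and a unit ω with ωⁿ = 1; let E be a bracket-preserving
endomorphism with Eⁿ = 1 (the action of φ).  Let u, x₁, …, x_k ∈ L and indices
j, i₁, …, i_k with j + i₁ + ⋯ + i_k ≡ 0 (mod n).  If for every tuple
(a₁, …, a_k) the "orbit sums" ∑_{t<n} E^t [u, E^{a₁}x₁, …, E^{a_k}x_k] vanish,
then the left-normed bracket of the φ-terms [u_j, (x₁)_{i₁}, …, (x_k)_{i_k}]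
is zero. -/
theorem stmt_17 {R L : Type*} [CommRing R] [LieRing L] [LieAlgebra R L]
    (n : ℕ) (hn : 0 < n) (ω ν : Rˣ)
    (hω : (ω : R) ^ n = 1) (hν : (ν : R) = (n : R))
    (E : L →ₗ[R] L) (hEbr : ∀ a b : L, E ⁅a, b⁆ = ⁅E a, E b⁆) (hord : E ^ n = 1)
    (k : ℕ) (u : L) (x : Fin k → L)
    (j : ℕ) (i : Fin k → ℕ)
    (hzero : (j + ∑ s, i s) % n = 0)
    (hyp : ∀ a : Fin k → ℕ,
      ∑ t ∈ Finset.range n,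
        (E ^ t) ((List.ofFn fun s => (E ^ (a s)) (x s)).foldl
          (fun acc z => ⁅acc, z⁆) u) = 0) :
    List.foldl (fun acc z => ⁅acc, z⁆)
        (((ν⁻¹ : Rˣ) : R) •
          ∑ t ∈ Finset.range n, ((ω ^ (-((j * t : ℕ) : ℤ)) : Rˣ) : R) • (E ^ t) u)
        (List.ofFn fun s : Fin k =>
          ((ν⁻¹ : Rˣ) : R) •
            ∑ t ∈ Finset.range n, ((ω ^ (-((i s * t : ℕ) : ℤ)) : Rˣ) : R) • (E ^ t) (x s))
      = 0 :=
  stmt_17_general n ω ν hω E hEbr hord k u x j i hzero hyp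
end

section
/- Let G be a finite group, φ an automorphism of order n coprime to |G|, and fix elements x, y, ..., z ∈ G (a tuple v⃗ of length k) and a tuple a⃗ = (a_1,...,a_k) of elements of ℤ/nℤ. Then the map θ_{v⃗,a⃗}: G → γ_{k+1}(G)/γ_{k+2}(G) sending u ↦ (∏_{t=0}^{n-1} [u, x^{φ^{a_1}}, ..., z^{φ^{a_k}}]^{φ^t}) γ_{k+2}(G) is a group homomorphism whose image lies in C_{γ_{k+1}(G)/γ_{k+2}(G)}(φ); consequently |G : ker θ_{v⃗,a⃗}| ≤ |C_{L(G)}(φ)|. -/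
/-!
Modulo `γ (j + 2)` one has `⁅a * b, z⁆ ≡ ⁅a, z⁆ * ⁅b, z⁆` as soon as `b ∈ γ j`, so by induction
`u ↦ [u, z₁, …, z_k]` is a homomorphism into the central section `γ k / γ (k + 1)`. Twisting it by
the powers `φ ^ t` and multiplying the results in the abelian centre gives `θ`; applying `φ`
only shifts the factors cyclically, which changes nothing because `φ ^ n = 1` and the factors
are central.

For the index bound, the image of `θ` consists of `φ`-fixed points of `G ⧸ γ (k + 1)`, and when
`n` is prime to `|G|` every `φ`-stable coset of a `φ`-invariant subgroup contains a `φ`-fixed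
element. For `n` prime this is the fixed-point congruence for `p`-groups acting on a set of size
prime to `p`; in general pick a prime `p ∣ n`, find a fixed point of `φ ^ (n / p)` in the coset and
descend to the fixed subgroup of `φ ^ (n / p)`, on which `φ` has order dividing `n / p`.
-/

open Subgroup

open scoped commutatorElement IsMulCommutative

theorem List.prod_range_map_succ_of_commute {M : Type*} [Monoid M] (f : ℕ → M) (n : ℕ)
    (hn : f n = f 0) (h0 : ∀ m, Commute (f 0) m) :
    ((List.range n).map fun t => f (t + 1)).prod = ((List.range n).map f).prod := by
  cases n with
  | zero => rfl
  | succ n =>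
    rw [List.prod_range_succ (fun t => f (t + 1)), List.prod_range_succ' f, hn, (h0 _).eq]

namespace MulAut

variable {G : Type*} [Group G]

theorem pow_apply_mem {φ : MulAut G} {N : Subgroup G} (hN : ∀ g ∈ N, φ g ∈ N) (t : ℕ)
    {g : G} (hg : g ∈ N) : (φ ^ t) g ∈ N := by
  induction t with
  | zero => exact hg
  | succ t ih => rw [pow_succ', mul_apply]; exact hN _ ih

theorem inv_pow_apply_mul_mem {φ : MulAut G} {N : Subgroup G} (hN : ∀ g ∈ N, φ g ∈ N) {x : G}
    (hx : (φ x)⁻¹ * x ∈ N) (t : ℕ) : ((φ ^ t) x)⁻¹ * x ∈ N := by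
  induction t with
  | zero => simp
  | succ t ih =>
    have h : ((φ ^ (t + 1)) x)⁻¹ * x = (φ ^ t) ((φ x)⁻¹ * x) * (((φ ^ t) x)⁻¹ * x) := by
      rw [pow_succ, mul_apply, map_mul, map_inv]; group
    rw [h]
    exact mul_mem (pow_apply_mem hN t hx) ih

theorem exists_fixed_mem_of_prime [Finite G] {p : ℕ} [Fact p.Prime] (hp : ¬p ∣ Nat.card G)
    (ψ : MulAut G) {H N : Subgroup G} (hH : ∀ h ∈ H, ψ h ∈ H) (hN : ∀ g ∈ N, ψ g ∈ N)
    (hψp : ∀ h ∈ H, (ψ ^ p) h = h) {x : G} (hx : x ∈ H) (hxN : (ψ x)⁻¹ * x ∈ N) :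
    ∃ y ∈ H, ψ y = y ∧ y⁻¹ * x ∈ N := by
  classical
  let S := {h : G // h ∈ H ∧ h⁻¹ * x ∈ N}
  have hS : ∀ h, h ∈ H ∧ h⁻¹ * x ∈ N → ψ h ∈ H ∧ (ψ h)⁻¹ * x ∈ N := by
    rintro h ⟨hhH, hhN⟩
    refine ⟨hH h hhH, ?_⟩
    have e : (ψ h)⁻¹ * x = ψ (h⁻¹ * x) * ((ψ x)⁻¹ * x) := by rw [map_mul, map_inv]; group
    rw [e]
    exact mul_mem (hN _ hhN) hxN
  let σ : Equiv.Perm S := Equiv.Perm.subtypePermOfFintype ψ.toEquiv hS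
  have hσ : ∀ (t : ℕ) (s : S), ((σ ^ t) s : G) = (ψ ^ t) s := by
    intro t s
    induction t with
    | zero => rfl
    | succ t ih => rw [pow_succ', Equiv.Perm.mul_apply, pow_succ', mul_apply, ← ih]; rfl
  have hσp : σ ^ p ^ 1 = 1 := by
    ext s
    rw [pow_one, hσ]
    exact hψp s s.2.1
  have hcard : Nat.card S = Nat.card (H ⊓ N : Subgroup G) := Nat.card_congr
    { toFun := fun s => ⟨(s : G)⁻¹ * x, mem_inf.mpr ⟨mul_mem (inv_mem s.2.1) hx, s.2.2⟩⟩
      invFun := fun m => ⟨x * (m : G)⁻¹, mul_mem hx (inv_mem (mem_inf.mp m.2).1),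
        by simpa using (mem_inf.mp m.2).2⟩
      left_inv := fun s => by simp
      right_inv := fun m => by simp }
  have : Fintype S := Fintype.ofFinite S
  obtain ⟨s, hs⟩ := Equiv.Perm.exists_fixed_point_of_prime (α := S) (by
    rw [← Nat.card_eq_fintype_card, hcard]
    exact fun h => hp (h.trans (card_subgroup_dvd_card _))) hσp
  exact ⟨s, s.2.1, congrArg Subtype.val hs, s.2.2⟩

theorem exists_fixed_mem_of_coprime [Finite G] (n : ℕ) (hcop : n.Coprime (Nat.card G))
    (φ : MulAut G) {H N : Subgroup G} (hH : ∀ h ∈ H, φ h ∈ H) (hN : ∀ g ∈ N, φ g ∈ N)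
    (hφn : ∀ h ∈ H, (φ ^ n) h = h) {x : G} (hx : x ∈ H) (hxN : (φ x)⁻¹ * x ∈ N) :
    ∃ y ∈ H, φ y = y ∧ y⁻¹ * x ∈ N := by
  induction n using Nat.strong_induction_on generalizing H x with
  | _ n ih =>
  obtain rfl | hn1 := eq_or_ne n 1
  · exact ⟨x, hx, by simpa using hφn x hx, by simp⟩
  obtain ⟨p, hp, q, rfl⟩ := Nat.exists_prime_and_dvd hn1
  have : Fact p.Prime := ⟨hp⟩
  obtain rfl | hq := Nat.eq_zero_or_pos q
  · have : Subsingleton G :=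
      (Nat.card_eq_one_iff_unique.mp (Nat.coprime_zero_left _ |>.mp hcop)).1
    exact ⟨x, hx, Subsingleton.elim _ _, by simp⟩
  set ψ := φ ^ q
  obtain ⟨x', hx'H, hx'ψ, hx'N⟩ := exists_fixed_mem_of_prime
    (hp.coprime_iff_not_dvd.mp (hcop.coprime_dvd_left (dvd_mul_right p q))) ψ
    (fun h hh => pow_apply_mem hH q hh) (fun g hg => pow_apply_mem hN q hg)
    (fun h hh => by rw [← pow_mul, mul_comm]; exact hφn h hh) hx (inv_pow_apply_mul_mem hN hxN q)
  let F := H ⊓ ψ.toMonoidHom.eqLocus (MonoidHom.id G)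
  have hF : ∀ h ∈ F, φ h ∈ F := by
    intro h hh
    refine mem_inf.mpr ⟨hH h (mem_inf.mp hh).1, ?_⟩
    have hψ : ψ h = h := (mem_inf.mp hh).2
    show ψ (φ h) = φ h
    rw [← mul_apply, ← pow_succ, pow_succ', mul_apply, hψ]
  have hx'N' : (φ x')⁻¹ * x' ∈ N := by
    have e : (φ x')⁻¹ * x' = φ (x'⁻¹ * x) * ((φ x)⁻¹ * x) * (x'⁻¹ * x)⁻¹ := by
      rw [map_mul, map_inv]; group
    rw [e]
    exact mul_mem (mul_mem (hN _ hx'N) hxN) (inv_mem hx'N)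
  obtain ⟨y, hyF, hyφ, hyN⟩ := ih q (lt_mul_left hq hp.one_lt)
    (hcop.coprime_dvd_left (dvd_mul_left q p)) hF (fun h hh => (mem_inf.mp hh).2)
    (mem_inf.mpr ⟨hx'H, hx'ψ⟩) hx'N'
  refine ⟨y, (mem_inf.mp hyF).1, hyφ, ?_⟩
  simpa [mul_assoc] using mul_mem hyN hx'N

theorem mk_apply_prod_pow_apply {φ : MulAut G} {n : ℕ} (hφn : φ ^ n = 1) (N : Subgroup G)
    [N.Normal] {x : G} (hx : (x : G ⧸ N) ∈ center (G ⧸ N)) :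
    ((φ ((List.range n).map fun t => (φ ^ t) x).prod : G) : G ⧸ N) =
      (((List.range n).map fun t => (φ ^ t) x).prod : G) := by
  have hshift : φ ((List.range n).map fun t => (φ ^ t) x).prod =
      ((List.range n).map fun t => (φ ^ (t + 1)) x).prod := by
    simp only [map_list_prod, List.map_map, Function.comp_def, pow_succ', mul_apply]
  have hmk : ∀ L : List G, ((L.prod : G) : G ⧸ N) = (L.map (QuotientGroup.mk' N)).prod :=
    map_list_prod (QuotientGroup.mk' N)
  rw [hshift, hmk, hmk, List.map_map, List.map_map]
  exact List.prod_range_map_succ_of_commute (fun t => QuotientGroup.mk' N ((φ ^ t) x)) n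
    (by simp [hφn]) fun m => by
      simp only [pow_zero, one_apply, QuotientGroup.mk'_apply]
      exact (mem_center_iff.mp hx m).symm

theorem card_fixed_quotient_le [Finite G] {φ : MulAut G} {n : ℕ} (hφn : φ ^ n = 1)
    (hcop : n.Coprime (Nat.card G)) (N : Subgroup G) [N.Normal] (hN : N ≤ N.comap φ.toMonoidHom) :
    Nat.card {q : G ⧸ N // QuotientGroup.map N N φ.toMonoidHom hN q = q} ≤
      Nat.card {g : G // φ g = g} := by
  refine Nat.card_le_card_of_surjective (fun g => ⟨g, by simp [g.2]⟩) ?_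
  rintro ⟨q, hq⟩
  induction q using QuotientGroup.induction_on with
  | H x =>
  rw [QuotientGroup.map_mk] at hq
  obtain ⟨y, -, hy, hyx⟩ := exists_fixed_mem_of_coprime n hcop φ (H := ⊤) (fun _ _ => mem_top _)
    hN (fun h _ => by simp [hφn]) (mem_top x) (QuotientGroup.eq.mp hq)
  exact ⟨⟨y, hy⟩, Subtype.ext (QuotientGroup.eq.mpr hyx)⟩

end MulAut

section LowerCentralSeries

variable {G : Type*} [Group G]

-- Mathlib indexes the lower central series from `0`: `γ j` is the paper's `γ_{j+1}`.
local notation "γ" => Subgroup.lowerCentralSeries (⊤ : Subgroup G)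

def leftNormedComm (u : G) (l : List G) : G := l.foldl (fun y z => ⁅y, z⁆) u

theorem commutatorElement_mem_lowerCentralSeries_succ {j : ℕ} {x : G} (hx : x ∈ γ j) (g : G) :
    ⁅x, g⁆ ∈ γ (j + 1) :=
  commutator_mem_commutator hx (mem_top g)

theorem leftNormedComm_mem_lowerCentralSeries (l : List G) {j : ℕ} {u : G} (hu : u ∈ γ j) :
    leftNormedComm u l ∈ γ (j + l.length) := by
  induction l generalizing j u with
  | nil => exact hu
  | cons z l ih =>
    rw [List.length_cons, ← add_assoc, add_right_comm]
    exact ih (commutatorElement_mem_lowerCentralSeries_succ hu z)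

theorem leftNormedComm_mem_lowerCentralSeries_length (l : List G) (u : G) :
    leftNormedComm u l ∈ γ l.length := by
  simpa using leftNormedComm_mem_lowerCentralSeries l (j := 0) (mem_top u)

theorem mk_mem_center_of_mem_lowerCentralSeries {j : ℕ} {g : G} (hg : g ∈ γ j) :
    (g : G ⧸ γ (j + 1)) ∈ center (G ⧸ γ (j + 1)) := by
  refine mem_center_iff.mpr fun q => ?_
  induction q using QuotientGroup.induction_on with
  | H h =>
  rw [← QuotientGroup.mk_mul, ← QuotientGroup.mk_mul, QuotientGroup.eq]
  have e : (h * g)⁻¹ * (g * h) = ⁅g⁻¹, h⁻¹⁆ := by group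
  rw [e]
  exact commutatorElement_mem_lowerCentralSeries_succ (inv_mem hg) _

theorem mk_commutatorElement_mul {j : ℕ} (a : G) {b : G} (hb : b ∈ γ j) (z : G) :
    ((⁅a * b, z⁆ : G) : G ⧸ γ (j + 2)) = (⁅a, z⁆ : G) * (⁅b, z⁆ : G) := by
  rw [eq_comm, ← QuotientGroup.mk_mul, QuotientGroup.eq]
  have e : (⁅a, z⁆ * ⁅b, z⁆)⁻¹ * ⁅a * b, z⁆ = ⁅⁅b, z⁆⁻¹, ⁅a, z⁆⁻¹ * a⁆ := by group
  rw [e]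
  exact commutatorElement_mem_lowerCentralSeries_succ
    (inv_mem (commutatorElement_mem_lowerCentralSeries_succ hb z)) _

theorem mk_commutatorElement_of_mk_eq {j : ℕ} {u₁ u₂ w : G} (hu₂ : u₂ ∈ γ j)
    (hw : (w : G ⧸ γ (j + 1)) = (u₁ * u₂ : G)) (z : G) :
    ((⁅w, z⁆ : G) : G ⧸ γ (j + 2)) = (⁅u₁, z⁆ * ⁅u₂, z⁆ : G) := by
  obtain ⟨ν, hν, rfl⟩ : ∃ ν ∈ γ (j + 1), u₁ * u₂ * ν = w :=
    ⟨_, QuotientGroup.eq.mp hw.symm, mul_inv_cancel_left _ _⟩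
  have hνz : ((⁅ν, z⁆ : G) : G ⧸ γ (j + 2)) = 1 :=
    (QuotientGroup.eq_one_iff _).mpr (commutatorElement_mem_lowerCentralSeries_succ hν z)
  rw [mk_commutatorElement_mul _ (Subgroup.lowerCentralSeries_antitone _ j.le_succ hν), hνz,
    mul_one, mk_commutatorElement_mul _ hu₂, QuotientGroup.mk_mul]

theorem mk_leftNormedComm_of_mk_eq (l : List G) {j : ℕ} {u₁ u₂ w : G} (hu₂ : u₂ ∈ γ j)
    (hw : (w : G ⧸ γ (j + 1)) = (u₁ * u₂ : G)) :
    ((leftNormedComm w l : G) : G ⧸ γ (j + l.length + 1)) =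
      (leftNormedComm u₁ l * leftNormedComm u₂ l : G) := by
  induction l generalizing j u₁ u₂ w with
  | nil => exact hw
  | cons z l ih =>
    rw [List.length_cons, ← add_assoc, add_right_comm j]
    exact ih (commutatorElement_mem_lowerCentralSeries_succ hu₂ z)
      (mk_commutatorElement_of_mk_eq hu₂ hw z)

theorem mk_leftNormedComm_mul (l : List G) (u₁ u₂ : G) :
    ((leftNormedComm (u₁ * u₂) l : G) : G ⧸ γ (l.length + 1)) =
      (leftNormedComm u₁ l * leftNormedComm u₂ l : G) := by
  have h := mk_leftNormedComm_of_mk_eq l (mem_top u₂) (j := 0) (u₁ := u₁) rfl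
  rwa [zero_add] at h

theorem mk_apply_leftNormedComm_mul (ρ : MulAut G) (l : List G) (u₁ u₂ : G) :
    ((ρ (leftNormedComm (u₁ * u₂) l) : G) : G ⧸ γ (l.length + 1)) =
      (ρ (leftNormedComm u₁ l) * ρ (leftNormedComm u₂ l) : G) := by
  rw [QuotientGroup.eq, ← map_mul, ← map_inv, ← map_mul]
  exact characteristic_iff_le_comap.mp inferInstance ρ
    (QuotientGroup.eq.mp (mk_leftNormedComm_mul l u₁ u₂))

def leftNormedCommHom (ρ : MulAut G) (l : List G) : G →* center (G ⧸ γ (l.length + 1)) :=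
  MonoidHom.mk'
    (fun u => ⟨ρ (leftNormedComm u l), mk_mem_center_of_mem_lowerCentralSeries <|
      characteristic_iff_le_comap.mp inferInstance ρ <|
        leftNormedComm_mem_lowerCentralSeries_length l u⟩)
    fun u₁ u₂ => Subtype.ext (mk_apply_leftNormedComm_mul ρ l u₁ u₂)

def orbitProdHom (φ : MulAut G) (n : ℕ) (l : List G) : G →* center (G ⧸ γ (l.length + 1)) :=
  ((List.range n).map fun t => leftNormedCommHom (φ ^ t) l).prod

theorem coe_orbitProdHom_apply (φ : MulAut G) (n : ℕ) (l : List G) (u : G) :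
    (orbitProdHom φ n l u : G ⧸ γ (l.length + 1)) =
      (((List.range n).map fun t => (φ ^ t) (leftNormedComm u l)).prod : G) := by
  rw [orbitProdHom, ← MonoidHom.eval_apply_apply, map_list_prod, Subgroup.val_list_prod,
    ← QuotientGroup.mk'_apply, map_list_prod, List.map_map, List.map_map, List.map_map]
  rfl

end LowerCentralSeries

/-- For a finite group G with automorphism φ of order n coprime to |G|, fixed
elements v₁,…,v_k and exponents a₁,…,a_k, the map
u ↦ (∏_{t<n} φ^t([u, v₁^{φ^{a₁}}, …, v_k^{φ^{a_k}}])) mod γ_{k+2}(G)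
is a homomorphism θ : G → γ_{k+1}/γ_{k+2}-level quotient whose image consists of
φ-fixed points; consequently its kernel has index at most |C_G(φ)|
( = |C_{L(G)}(φ)| by coprimality). -/
theorem stmt_18 {G : Type*} [Group G] [Finite G]
    (φ : MulAut G) (n : ℕ) (hn : orderOf φ = n)
    (hcop : Nat.Coprime n (Nat.card G))
    (k : ℕ) (v : Fin k → G) (a : Fin k → ℕ)
    (hinv : (⊤ : Subgroup G).lowerCentralSeries (k + 1) ≤
      ((⊤ : Subgroup G).lowerCentralSeries (k + 1)).comap φ.toMonoidHom) :
    ∃ Θ : G →* G ⧸ (⊤ : Subgroup G).lowerCentralSeries (k + 1),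
      (∀ u : G, Θ u = QuotientGroup.mk
        (((List.range n).map fun t =>
          (φ ^ t) (List.foldl (fun y z => ⁅y, z⁆) u
            (List.ofFn fun s => (φ ^ (a s)) (v s)))).prod)) ∧
      (∀ u : G, QuotientGroup.map ((⊤ : Subgroup G).lowerCentralSeries (k + 1))
          ((⊤ : Subgroup G).lowerCentralSeries (k + 1)) φ.toMonoidHom hinv (Θ u) = Θ u) ∧
      Θ.ker.index ≤ Nat.card { g : G // φ g = g } := by
  have hφn : φ ^ n = 1 := hn ▸ pow_orderOf_eq_one φ
  have hl : (List.ofFn fun s => (φ ^ a s) (v s)).length = k := List.length_ofFn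
  generalize List.ofFn (fun s => (φ ^ a s) (v s)) = l at hl ⊢
  subst hl
  let Θ := (center _).subtype.comp (orbitProdHom φ n l)
  have hfix : ∀ u, QuotientGroup.map _ _ φ.toMonoidHom hinv (Θ u) = Θ u := fun u => by
    simp only [Θ, MonoidHom.comp_apply, coe_subtype, coe_orbitProdHom_apply, QuotientGroup.map_mk]
    exact MulAut.mk_apply_prod_pow_apply hφn _ <| mk_mem_center_of_mem_lowerCentralSeries <|
      leftNormedComm_mem_lowerCentralSeries_length l u
  refine ⟨Θ, coe_orbitProdHom_apply φ n l, hfix, ?_⟩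
  calc Θ.ker.index = Nat.card Θ.range := Subgroup.index_ker Θ
    _ ≤ Nat.card {q // QuotientGroup.map _ _ φ.toMonoidHom hinv q = q} :=
      Nat.card_mono (Set.toFinite _) (by rintro _ ⟨u, rfl⟩; exact hfix u)
    _ ≤ Nat.card {g // φ g = g} := MulAut.card_fixed_quotient_le hφn hcop _ hinv
end
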